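/- arXiv:1807.05413 — 2 statements merged into one kernel-verified Lean document; each statement's English description precedes it below -/
import Mathlib

section
/- For all integers n ≥ 1 and m, a, b ≥ 0, the (area, bounce) q,t-enumerator of decorated Dyck paths with decorated falls satisfies DDb_{q,t}(m, n∖n)^{∗b,∘a} = δ_{a,0} · q^{binom(n−b,2)} · qbinom(m+n−1, m)_q · qbinom(n, b)_q, where δ_{a,0} = 1 if a = 0 and 0 otherwise, and binom(n−b,2) = (n−b)(n−b−1)/2. -/
open Finset

attribute [local instance] Classical.propDecidable

noncomputable section

/-- The ring of polynomials in the two variables `q` and `t` with integer coefficients. -/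
abbrev R2 : Type := MvPolynomial (Fin 2) ℤ

/-- The variable `q`. -/
def qv : R2 := MvPolynomial.X 0

/-- The variable `t`. -/
def tv : R2 := MvPolynomial.X 1

/-- The Gaussian binomial coefficient `[N choose k]_q`, defined via the q-Pascal
recursion `[N+1, k+1]_q = [N, k]_q + q^(k+1) [N, k+1]_q`; it agrees with
`[N]_q! / ([k]_q! [N-k]_q!)` for `0 ≤ k ≤ N` and vanishes for `k > N`. -/
def qBinom : ℕ → ℕ → R2
  | _, 0 => 1
  | 0, _ + 1 => 0
  | N + 1, k + 1 => qBinom N k + qv ^ (k + 1) * qBinom N (k + 1)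

/-- The Gaussian binomial coefficient with integer arguments:
it is `0` unless `0 ≤ k ≤ N`. -/
def qBinomZ (N k : ℤ) : R2 :=
  if 0 ≤ k ∧ k ≤ N then qBinom N.toNat k.toNat else 0

/-! ## Dyck paths as step words

A lattice path is encoded as a word `w : Fin L → Bool`, where `true` is a north
step and `false` is an east step. -/

/-- The number of north steps among the first `k` steps. -/
def nBef {L : ℕ} (w : Fin L → Bool) (k : ℕ) : ℕ :=
  (univ.filter fun i : Fin L => i.1 < k ∧ w i = true).card

/-- The number of east steps among the first `k` steps. -/
def eBef {L : ℕ} (w : Fin L → Bool) (k : ℕ) : ℕ :=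
  (univ.filter fun i : Fin L => i.1 < k ∧ w i = false).card

/-- `w` is the step word of a Dyck path of size `N`: it has `N` north steps
(hence `N` east steps) and every prefix has at least as many norths as easts,
i.e. the path stays weakly above the main diagonal. -/
def IsDyckStep (N : ℕ) (w : Fin (2 * N) → Bool) : Prop :=
  nBef w (2 * N) = N ∧ ∀ k : ℕ, k ≤ 2 * N → eBef w k ≤ nBef w k

/-- A valley: a north step directly preceded by an east step. -/
def IsValleyS {L : ℕ} (w : Fin L → Bool) (i : Fin L) : Prop :=
  w i = true ∧ ∃ j : Fin L, i.1 = j.1 + 1 ∧ w j = false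

/-- A peak: a north step followed by an east step, or the last (north) step. -/
def IsPeakS {L : ℕ} (w : Fin L → Bool) (i : Fin L) : Prop :=
  w i = true ∧ ∀ j : Fin L, j.1 = i.1 + 1 → w j = false

/-- A fall: an east step immediately followed by another east step. -/
def IsFallS {L : ℕ} (w : Fin L → Bool) (i : Fin L) : Prop :=
  w i = false ∧ ∃ j : Fin L, j.1 = i.1 + 1 ∧ w j = false

/-- A fall, where additionally the last step of the path is allowed. -/
def IsFallX {L : ℕ} (w : Fin L → Bool) (i : Fin L) : Prop :=
  w i = false ∧ (i.1 + 1 = L ∨ ∃ j : Fin L, j.1 = i.1 + 1 ∧ w j = false)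

/-! ## The bounce statistic for Dyck paths with zero valleys

Every zero valley (its north step together with the east step immediately
preceding it) is replaced by a diagonal step; the modified path has exactly one
east or diagonal step in each column.  The bounce path starts at the origin
travelling north; when it reaches the beginning of the east/diagonal step of
the path in its current column it travels east/diagonally, parallel to the
steps of the path in the columns it traverses, until it reaches the main
diagonal, where it turns north again. -/

/-- Column `c` of the modified path carries a diagonal step: the east step of
column `c` is immediately followed by a zero valley. -/
def IsDiagCol {L : ℕ} (w : Fin L → Bool) (Z : Finset (Fin L)) (c : ℕ) : Prop :=
  ∃ i j : Fin L, w i = false ∧ eBef w i.1 = c ∧ j.1 = i.1 + 1 ∧ j ∈ Z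

/-- The rise (`0` or `1`) of the modified path’s step in column `c`. -/
def diagStep {L : ℕ} (w : Fin L → Bool) (Z : Finset (Fin L)) (c : ℕ) : ℕ :=
  if IsDiagCol w Z c then 1 else 0

/-- The height of the beginning of the east/diagonal step of the path in
column `c` (the number of north steps before the `(c+1)`-st east step). -/
def colY {L : ℕ} (w : Fin L → Bool) (c : ℕ) : ℕ :=
  (univ.filter fun i : Fin L => w i = true ∧ eBef w i.1 ≤ c).card

/-- The height of the bounce ball, having last touched the diagonal in column
`d`, upon reaching the vertical line `x = c`. -/
def bH {L : ℕ} (w : Fin L → Bool) (Z : Finset (Fin L)) (d c : ℕ) : ℕ :=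
  colY w d + ∑ x ∈ Finset.Ico d c, diagStep w Z x

/-- The column of the next point where the bounce path touches the main
diagonal, having last touched it in column `d` (for an actual Dyck path the
bounce path reaches the corner in column `N`, so the clause `c = N` only makes
the function stabilize at `N`). -/
def nextTouch (N : ℕ) {L : ℕ} (w : Fin L → Bool) (Z : Finset (Fin L)) (d : ℕ) : ℕ :=
  sInf {c : ℕ | (d < c ∧ bH w Z d c = c) ∨ c = N}

/-- The column of the `k`-th touching point of the bounce path with the main
diagonal. -/
def touchPt (N : ℕ) {L : ℕ} (w : Fin L → Bool) (Z : Finset (Fin L)) : ℕ → ℕ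
  | 0 => 0
  | k + 1 => nextTouch N w Z (touchPt N w Z k)

/-- The letter of the bounce word carried by the vertical-or-diagonal bounce
step at height `h`: the number of diagonal touches up to that height. -/
def bLabel (N : ℕ) {L : ℕ} (w : Fin L → Bool) (Z : Finset (Fin L)) (h : ℕ) : ℕ :=
  ((Finset.Icc 1 N).filter fun k => touchPt N w Z k ≤ h).card

/-- The height, upon reaching the vertical line `x = c`, of the path traced
east from (the top of) the north step `p`, parallel to the bounce path. -/
def traceH {L : ℕ} (w : Fin L → Bool) (Z : Finset (Fin L)) (p : Fin L) (c : ℕ) : ℕ :=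
  (nBef w p.1 + 1) + ∑ x ∈ Finset.Ico (eBef w p.1) c, diagStep w Z x

/-- The index (height) of the bounce-word letter cancelled by the decorated
peak `p`: the trace from `p` travels east, parallel to the bounce path, until
it first hits a vertical run of the bounce path, at the end of a
vertical-or-diagonal bounce step. -/
def cancelIdx (N : ℕ) {L : ℕ} (w : Fin L → Bool) (Z : Finset (Fin L)) (p : Fin L) : ℕ :=
  traceH w Z p
      (sInf {d : ℕ | eBef w p.1 ≤ d ∧ (∃ k ≤ N, touchPt N w Z k = d) ∧
        d ≤ traceH w Z p d ∧ traceH w Z p d ≤ colY w d}) - 1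

/-- The bounce statistic: the sum of the letters of the bounce word whose
indices are not cancelled by a decorated peak in `P`. -/
def bounceS (N : ℕ) {L : ℕ} (w : Fin L → Bool) (Z P : Finset (Fin L)) : ℕ :=
  ∑ h ∈ (Finset.range N).filter (fun h => h ∉ P.image (cancelIdx N w Z)), bLabel N w Z h

/-! ## The set `DDb(m, n∖r)^{∗b, ∘a}` -/

/-- Candidate objects: (step word, zero valleys, decorated peaks, decorated falls). -/
abbrev DDbCand (N : ℕ) :=
  (Fin (2 * N) → Bool) × Finset (Fin (2 * N)) × Finset (Fin (2 * N)) × Finset (Fin (2 * N))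

/-- Membership in `DDb(m, n∖r)^{∗b, ∘a}`: a Dyck path of size `m+n` with `m`
zero valleys, `a` decorated peaks (which are not zero valleys, and the
leftmost peak is never decorated), `b` decorated falls (the last step of the
path being allowed as a decorated fall), starting with exactly `r` north steps
followed by an east step. -/
def IsDDb (m n r b a : ℕ) (x : DDbCand (m + n)) : Prop :=
  IsDyckStep (m + n) x.1 ∧
    (∀ i ∈ x.2.1, IsValleyS x.1 i) ∧ x.2.1.card = m ∧
    (∀ i ∈ x.2.2.1, IsPeakS x.1 i) ∧ x.2.2.1.card = a ∧
    Disjoint x.2.2.1 x.2.1 ∧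
    (∀ i ∈ x.2.2.1, ∃ j : Fin (2 * (m + n)), IsPeakS x.1 j ∧ j.1 < i.1) ∧
    (∀ i ∈ x.2.2.2, IsFallX x.1 i) ∧ x.2.2.2.card = b ∧
    (∀ i : Fin (2 * (m + n)), i.1 < r → x.1 i = true) ∧
    (∀ i : Fin (2 * (m + n)), i.1 = r → x.1 i = false)

/-- The area: the number of whole squares between the path and the main
diagonal not lying in a column of a decorated fall (the column of the east
step `i` contains `nBef - eBef - 1` such squares). -/
def areaDDb {N : ℕ} (x : DDbCand N) : ℕ :=
  ∑ i ∈ univ.filter (fun i => x.1 i = false ∧ i ∉ x.2.2.2),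
    (nBef x.1 i.1 - eBef x.1 i.1 - 1)

/-- The bounce statistic of a decorated path. -/
def bounceDDb {N : ℕ} (x : DDbCand N) : ℕ := bounceS N x.1 x.2.1 x.2.2.1

/-- The `(area, bounce)` q,t-enumerator `DDb_{q,t}(m, n∖r)^{∗b, ∘a}`;
it is `0` if some parameter is negative. -/
def DDbE (m n r b a : ℤ) : R2 :=
  if 0 ≤ m ∧ 0 ≤ n ∧ 0 ≤ r ∧ 0 ≤ b ∧ 0 ≤ a then
    ∑ x ∈ univ.filter (IsDDb m.toNat n.toNat r.toNat b.toNat a.toNat),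
      qv ^ areaDDb x * tv ^ bounceDDb x
  else 0

/-! Since the path starts with `n` north steps and only `n` of its north steps are not zero
valleys, every later north step is a zero valley. Hence no peak other than the leftmost one can be
decorated, and after the replacement of zero valleys the path is `n` north steps followed by one
east or diagonal step per column. Such a path is determined by its set `T` of `m` diagonal
columns, which avoids the last column, and its decorated falls form a `b`-subset `D` of the `n`
remaining plain columns. The bounce path climbs to height `n` and then follows the path straight to
the corner, so the bounce is `0`. The area of a diagonal column is the number of plain columns to
its right other than the last, so these columns contribute the inversion number of `T`, with
generating function `[m+n-1, m]_q`; the area of a plain column is the number of plain columns to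
its right, so the undecorated plain columns contribute `q^binom(n-b, 2) [n, b]_q`. -/

lemma qBinom_eq_zero_of_lt : ∀ {N k : ℕ}, N < k → qBinom N k = 0
  | 0, _ + 1, _ => rfl
  | N + 1, k + 1, h => by
    rw [qBinom, qBinom_eq_zero_of_lt (by omega), qBinom_eq_zero_of_lt (by omega), mul_zero,
      add_zero]

lemma qBinomZ_natCast (N k : ℕ) : qBinomZ N k = qBinom N k := by
  rcases le_or_gt k N with h | h
  · simp [qBinomZ, h]
  · simp [qBinomZ, qBinom_eq_zero_of_lt h, not_le.2 h]

lemma toNat_mul_pred_div_two (d : ℕ) : ((d : ℤ) * (d - 1) / 2).toNat = d.choose 2 := by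
  have h : ((d * (d - 1) : ℕ) : ℤ) = d * (d - 1) := by rcases d with _ | d <;> simp
  rw [Nat.choose_two_right, ← h]
  omega

lemma sum_powersetCard_succ_insert {α M : Type*} [DecidableEq α] [AddCommMonoid M]
    {s : Finset α} {a : α} (ha : a ∉ s) (k : ℕ) (f : Finset α → M) :
    ∑ t ∈ powersetCard (k + 1) (insert a s), f t =
      ∑ t ∈ powersetCard (k + 1) s, f t + ∑ t ∈ powersetCard k s, f (insert a t) := by
  have not_mem {t} (ht : t ∈ powersetCard k s) : a ∉ t :=
    fun h => ha ((mem_powersetCard.1 ht).1 h)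
  rw [powersetCard_succ_insert ha, sum_union, sum_image]
  · intro t ht u hu htu
    rw [← erase_insert (not_mem ht), htu, erase_insert (not_mem hu)]
  · refine disjoint_left.2 fun t ht ht' => ?_
    obtain ⟨u, -, rfl⟩ := mem_image.1 ht'
    exact ha ((mem_powersetCard.1 ht).1 (mem_insert_self a u))

/-- The inversion number of the 0/1-word indexed by `s` whose ones sit at `t`. -/
def inversions (s t : Finset ℕ) : ℕ := ∑ c ∈ t, #{c' ∈ s \ t | c < c'}

theorem sum_powersetCard_qv_pow_inversions (s : Finset ℕ) (k : ℕ) :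
    ∑ t ∈ powersetCard k s, qv ^ inversions s t = qBinom #s k := by
  induction s using Finset.induction_on_max generalizing k with
  | empty => cases k <;> simp [inversions, qBinom]
  | insert a s ha ih =>
    have has : a ∉ s := fun h => lt_irrefl a (ha a h)
    cases k with
    | zero => simp [inversions, qBinom]
    | succ k =>
      have h_out (t) (ht : t ∈ powersetCard (k + 1) s) :
          inversions (insert a s) t = inversions s t + (k + 1) := by
        obtain ⟨hts, htk⟩ := mem_powersetCard.1 ht
        rw [inversions, inversions, ← htk, card_eq_sum_ones, ← sum_add_distrib]
        refine sum_congr rfl fun c hc => ?_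
        rw [insert_sdiff_of_notMem _ (fun h => has (hts h)), filter_insert, if_pos (ha c (hts hc)),
          card_insert_of_notMem (by simp [has])]
      have h_in (t) (ht : t ∈ powersetCard k s) :
          inversions (insert a s) (insert a t) = inversions s t := by
        have hat : a ∉ t := fun h => has ((mem_powersetCard.1 ht).1 h)
        rw [inversions, inversions, insert_sdiff_insert, sdiff_insert_of_notMem has,
          sum_insert hat, add_eq_right, card_eq_zero, filter_eq_empty_iff]
        exact fun c hc => not_lt.2 (ha c (mem_sdiff.1 hc).1).le
      rw [sum_powersetCard_succ_insert has,
        sum_congr rfl fun t ht => congrArg (qv ^ ·) (h_out t ht),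
        sum_congr rfl fun t ht => congrArg (qv ^ ·) (h_in t ht),
        card_insert_of_notMem has, qBinom, ← ih, ← ih, mul_sum]
      simp only [pow_add, add_comm, mul_comm]

theorem sum_powersetCard_qv_pow_sum_card_gt (s : Finset ℕ) (k : ℕ) :
    ∑ d ∈ powersetCard k s, qv ^ ∑ c ∈ s \ d, #{c' ∈ s | c < c'} =
      qv ^ (#s - k).choose 2 * qBinom #s k := by
  induction s using Finset.induction_on_min generalizing k with
  | empty => cases k <;> simp [qBinom]
  | insert a s ha ih =>
    have has : a ∉ s := fun h => lt_irrefl a (ha a h)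
    have h_count (c) (hc : c ∈ s) : #{c' ∈ insert a s | c < c'} = #{c' ∈ s | c < c'} := by
      rw [filter_insert, if_neg (not_lt.2 (ha c hc).le)]
    have h_top : #{c' ∈ insert a s | a < c'} = #s := by
      rw [filter_insert, if_neg (lt_irrefl a), filter_true_of_mem ha]
    have h_out (d) (hd : d ⊆ s) :
        ∑ c ∈ insert a s \ d, #{c' ∈ insert a s | c < c'} =
          #s + ∑ c ∈ s \ d, #{c' ∈ s | c < c'} := by
      have had : a ∉ d := fun h => has (hd h)
      rw [insert_sdiff_of_notMem _ had, sum_insert (fun h => has (mem_sdiff.1 h).1), h_top]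
      exact congrArg _ (sum_congr rfl fun c hc => h_count c (mem_sdiff.1 hc).1)
    have h_in (d : Finset ℕ) :
        ∑ c ∈ insert a s \ insert a d, #{c' ∈ insert a s | c < c'} =
          ∑ c ∈ s \ d, #{c' ∈ s | c < c'} := by
      rw [insert_sdiff_insert, sdiff_insert_of_notMem has]
      exact sum_congr rfl fun c hc => h_count c (mem_sdiff.1 hc).1
    rw [card_insert_of_notMem has]
    cases k with
    | zero =>
      have h := h_out ∅ (empty_subset s)
      have ih := ih 0
      simp only [powersetCard_zero, sum_singleton, sdiff_empty] at h ih ⊢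
      rw [h, pow_add, ih, Nat.sub_zero, Nat.sub_zero, Nat.choose_succ_succ', Nat.choose_one_right,
        pow_add]
      simp [qBinom]
    | succ k =>
      rw [sum_powersetCard_succ_insert has,
        sum_congr rfl fun d hd => congrArg (qv ^ ·) (h_out d (mem_powersetCard.1 hd).1),
        sum_congr rfl fun d _ => congrArg (qv ^ ·) (h_in d), ih, qBinom]
      simp only [pow_add, ← mul_sum, ih]
      rcases lt_or_ge #s (k + 1) with hks | hks
      · rw [qBinom_eq_zero_of_lt hks, Nat.sub_eq_zero_of_le (by omega : #s ≤ k),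
          show #s + 1 - (k + 1) = 0 by omega]
        ring
      · obtain ⟨d, hd⟩ := Nat.exists_eq_add_of_le hks
        rw [hd, show k + 1 + d + 1 - (k + 1) = d + 1 by omega, show k + 1 + d - k = d + 1 by omega,
          Nat.add_sub_cancel_left, Nat.choose_succ_succ', Nat.choose_one_right]
        ring

lemma card_filter_exists_eq {L : ℕ} {s : Finset ℕ} {f : ℕ → ℕ} (hf : Set.InjOn f s)
    (hfL : ∀ c ∈ s, f c < L) : #(univ.filter fun i : Fin L => ∃ c ∈ s, f c = i) = #s := by
  refine (card_bij (fun c hc => ⟨f c, hfL c hc⟩) (fun c hc => ?_)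
    (fun c hc c' hc' h => hf hc hc' (Fin.mk.inj h)) fun i hi => ?_).symm
  · simpa using ⟨c, hc, rfl⟩
  · obtain ⟨c, hc, hci⟩ := (mem_filter.1 hi).2
    exact ⟨c, hc, Fin.ext hci⟩

lemma card_filter_gt_add_card_range_succ_sdiff {K c : ℕ} (T : Finset ℕ) (hc : c < K) :
    #{x ∈ range K \ T | c < x} + #(range (c + 1) \ T) = #(range K \ T) := by
  rw [← card_filter_add_card_filter_not (s := range K \ T) (c < ·)]
  congr 2
  ext x
  simp only [mem_filter, mem_sdiff, mem_range, not_lt, Order.lt_add_one_iff]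
  exact ⟨fun h => ⟨⟨by omega, h.2⟩, h.1⟩, fun h => ⟨h.2, h.1.2⟩⟩

section Words

variable {L : ℕ} (w : Fin L → Bool)

lemma nBef_add_eBef {k : ℕ} (hk : k ≤ L) : nBef w k + eBef w k = k := by
  have h := card_filter_add_card_filter_not (s := {i : Fin L | i < k}) (fun i => w i = true)
  simp only [filter_filter, Bool.not_eq_true, Fin.card_filter_val_lt, min_eq_right hk] at h
  exact h

lemma eBef_succ {k : ℕ} (hk : k < L) :
    eBef w (k + 1) = eBef w k + if w ⟨k, hk⟩ = false then 1 else 0 := by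
  have h_split : (univ.filter fun i : Fin L => i.1 < k + 1 ∧ w i = false) =
      (univ.filter fun i : Fin L => i.1 < k ∧ w i = false) ∪
        if w ⟨k, hk⟩ = false then {⟨k, hk⟩} else ∅ := by
    ext i
    split_ifs with hw <;> simp only [mem_filter, mem_univ, true_and, mem_union, mem_singleton,
      Fin.ext_iff, notMem_empty, or_false] <;> grind
  rw [eBef, eBef, h_split, card_union_of_disjoint]
  · split_ifs <;> simp
  · split_ifs <;> simp

lemma eBef_mono {k k' : ℕ} (h : k ≤ k') : eBef w k ≤ eBef w k' :=
  card_le_card fun i hi => by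
    simp only [mem_filter] at hi ⊢; exact ⟨hi.1, by omega, hi.2.2⟩

lemma eBef_lt_of_eq_false {i : Fin L} (hi : w i = false) {k : ℕ} (h : i.1 < k) :
    eBef w i.1 < eBef w k :=
  card_lt_card ⟨fun j hj => by
      simp only [mem_filter] at hj ⊢; exact ⟨hj.1, by omega, hj.2.2⟩,
    fun hsub => by simpa using hsub (mem_filter.2 ⟨mem_univ i, h, hi⟩)⟩

lemma eBef_injOn_false {i i' : Fin L} (hi : w i = false) (hi' : w i' = false)
    (h : eBef w i.1 = eBef w i'.1) : i = i' := by
  rcases lt_trichotomy i.1 i'.1 with hlt | heq | hgt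
  · exact absurd h (eBef_lt_of_eq_false w hi hlt).ne
  · exact Fin.ext heq
  · exact absurd h (eBef_lt_of_eq_false w hi' hgt).ne'

lemma isDyckStep_of_eBef_lt_nBef {N : ℕ} (w : Fin (2 * N) → Bool) (hN : nBef w (2 * N) = N)
    (h : ∀ i, w i = false → eBef w i.1 < nBef w i.1) : IsDyckStep N w := by
  refine ⟨hN, fun k hk => ?_⟩
  induction k with
  | zero => simp [eBef]
  | succ k ih =>
    have h1 := nBef_add_eBef w hk
    have h2 := nBef_add_eBef w (Nat.le_of_succ_le hk)
    have h3 := eBef_succ w hk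
    have ih := ih (by omega)
    by_cases hw : w ⟨k, hk⟩ = false
    · have : eBef w k < nBef w k := h ⟨k, hk⟩ hw
      rw [if_pos hw] at h3
      omega
    · rw [if_neg hw] at h3
      omega

lemma eBef_length : eBef w L = #{i | w i = false} := by
  simp [eBef]

end Words

lemma IsDyckStep.eq_false_of_last {K : ℕ} {w : Fin (2 * K) → Bool} (hw : IsDyckStep K w)
    (i : Fin (2 * K)) (hi : i.1 + 1 = 2 * K) : w i = false := by
  by_contra h
  have h_succ := eBef_succ w (k := i.1) (by omega)
  have h_total := nBef_add_eBef w (le_refl (2 * K))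
  have h_i := nBef_add_eBef w (k := i.1) (by omega)
  have := hw.2 i.1 (by omega)
  rw [if_neg h, hi] at h_succ
  rw [hw.1] at h_total
  omega

lemma IsDyckStep.eBef_total {K : ℕ} {w : Fin (2 * K) → Bool} (hw : IsDyckStep K w) :
    eBef w (2 * K) = K := by
  have := nBef_add_eBef w (le_refl (2 * K))
  rw [hw.1] at this
  omega

lemma nextTouch_self {L S : ℕ} (w : Fin L → Bool) (Z : Finset (Fin L)) :
    nextTouch S w Z S = S :=
  le_antisymm (Nat.sInf_le (Or.inr rfl)) (le_csInf ⟨S, Or.inr rfl⟩ fun _ hc => by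
    rcases hc with ⟨hc, -⟩ | rfl <;> omega)

def diagCols (K : ℕ) {L : ℕ} (w : Fin L → Bool) (Z : Finset (Fin L)) : Finset ℕ :=
  (range K).filter (IsDiagCol w Z)

def fallCols {L : ℕ} (w : Fin L → Bool) (F : Finset (Fin L)) : Finset ℕ :=
  F.image fun i => eBef w i.1

section PathOfColumns

variable {M N : ℕ} {T : Finset ℕ}

/- The path encoded by a set `T` of diagonal columns: `N` north steps, then for each column `c`
an east step, followed by a north step (a zero valley) when `c ∈ T`. It enters column `c` at
height `colHeight N T c`, and the east step of column `c` sits at position `eastPos N T c`. -/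
def colHeight (N : ℕ) (T : Finset ℕ) (c : ℕ) : ℕ := N + #(range c ∩ T)

def eastPos (N : ℕ) (T : Finset ℕ) (c : ℕ) : ℕ := colHeight N T c + c

def pathWord (M N : ℕ) (T : Finset ℕ) (i : Fin (2 * (M + N))) : Bool :=
  !decide (∃ c < M + N, eastPos N T c = i)

def pathValleys (M N : ℕ) (T : Finset ℕ) : Finset (Fin (2 * (M + N))) :=
  univ.filter fun i => ∃ c ∈ T, eastPos N T c + 1 = i

def pathFalls (M N : ℕ) (T D : Finset ℕ) : Finset (Fin (2 * (M + N))) :=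
  univ.filter fun i => ∃ c ∈ D, eastPos N T c = i

def pathOf (M N : ℕ) (T D : Finset ℕ) : DDbCand (M + N) :=
  (pathWord M N T, pathValleys M N T, ∅, pathFalls M N T D)

lemma pathWord_eq_false_iff {i : Fin (2 * (M + N))} :
    pathWord M N T i = false ↔ ∃ c < M + N, eastPos N T c = i := by
  simp [pathWord]

variable (N T) in
lemma eastPos_succ (c : ℕ) :
    eastPos N T (c + 1) = eastPos N T c + 1 + if c ∈ T then 1 else 0 := by
  by_cases hc : c ∈ T
  · rw [eastPos, eastPos, colHeight, colHeight, range_add_one, insert_inter_of_mem hc,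
      card_insert_of_notMem (by simp), if_pos hc]
    omega
  · rw [eastPos, eastPos, colHeight, colHeight, range_add_one, insert_inter_of_notMem hc,
      if_neg hc]
    omega

variable (N T) in
lemma eastPos_strictMono : StrictMono (eastPos N T) :=
  strictMono_nat_of_lt_succ fun c => by rw [eastPos_succ]; omega

lemma eastPos_zero : eastPos N T 0 = N := by simp [eastPos, colHeight]

lemma pathWord_of_lt {i : Fin (2 * (M + N))} (hi : i.1 < N) : pathWord M N T i = true := by
  rw [← Bool.not_eq_false, pathWord_eq_false_iff]
  rintro ⟨c, -, hc⟩
  simp only [eastPos, colHeight] at hc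
  omega

lemma pathWord_eastPos_add_one {c : ℕ} (hc : c ∈ T) {i : Fin (2 * (M + N))}
    (hi : i.1 = eastPos N T c + 1) : pathWord M N T i = true := by
  rw [← Bool.not_eq_false, pathWord_eq_false_iff]
  rintro ⟨c', -, hc'⟩
  have h_gap := eastPos_succ N T c
  rw [if_pos hc] at h_gap
  have h1 : c < c' := (eastPos_strictMono N T).lt_iff_lt.1 (by omega)
  have h2 : c' < c + 1 := (eastPos_strictMono N T).lt_iff_lt.1 (by omega)
  omega

lemma pathWord_eq_false_of_val_eq {i : Fin (2 * (M + N))} (hi : i.1 = N) :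
    pathWord M N T i = false :=
  pathWord_eq_false_iff.2 ⟨0, by omega, by rw [eastPos_zero, hi]⟩

variable (hT : T ∈ powersetCard M (range (M + N - 1)))
include hT

lemma subset_range_size : T ⊆ range (M + N) :=
  (mem_powersetCard.1 hT).1.trans (range_subset_range.2 (Nat.sub_le _ 1))

lemma card_range_size_sdiff : #(range (M + N) \ T) = N := by
  have hT' := hT
  rw [mem_powersetCard] at hT'
  rw [card_sdiff_of_subset (subset_range_size hT), card_range, hT'.2]
  have := card_le_card hT'.1
  rw [card_range, hT'.2] at this
  omega

lemma lt_colHeight {c : ℕ} (hc : c < M + N) : c < colHeight N T c := by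
  obtain ⟨hTs, hTc⟩ := mem_powersetCard.1 hT
  have h_plain := card_le_card (sdiff_subset_sdiff (range_subset_range.2 (show c ≤ M + N - 1 by
    omega)) le_rfl : range c \ T ⊆ range (M + N - 1) \ T)
  rw [card_sdiff_of_subset hTs, card_range, hTc] at h_plain
  have h_split := card_inter_add_card_sdiff (range c) T
  have h_T := card_le_card hTs
  rw [card_range] at h_split h_T
  rw [colHeight]
  omega

lemma eastPos_last : eastPos N T (M + N - 1) = 2 * (M + N) - 1 := by
  obtain ⟨hTs, hTc⟩ := mem_powersetCard.1 hT
  rw [eastPos, colHeight, inter_eq_right.2 hTs, hTc]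
  omega

lemma eastPos_lt {c : ℕ} (hc : c < M + N) : eastPos N T c < 2 * (M + N) := by
  have h_last := eastPos_last hT
  have := (eastPos_strictMono N T).monotone (show c ≤ M + N - 1 by omega)
  omega

lemma eBef_pathWord (k : ℕ) :
    eBef (pathWord M N T) k = #{c ∈ range (M + N) | eastPos N T c < k} := by
  refine (card_bij
    (fun c hc => ⟨eastPos N T c, eastPos_lt hT (mem_range.1 (mem_filter.1 hc).1)⟩)
    ?_ ?_ ?_).symm
  · intro c hc
    simp only [mem_filter, mem_range] at hc
    simp only [mem_filter, mem_univ, true_and, pathWord_eq_false_iff]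
    exact ⟨hc.2, c, hc.1, rfl⟩
  · intro c _ c' _ h
    exact (eastPos_strictMono N T).injective (Fin.mk.inj h)
  · intro i hi
    simp only [mem_filter, mem_univ, true_and, pathWord_eq_false_iff] at hi
    obtain ⟨hik, c, hc, hci⟩ := hi
    exact ⟨c, by simpa [hci] using ⟨hc, hik⟩, Fin.ext hci⟩

lemma eBef_pathWord_eastPos {c : ℕ} (hc : c < M + N) :
    eBef (pathWord M N T) (eastPos N T c) = c := by
  rw [eBef_pathWord hT]
  convert card_range c using 2
  ext c'
  simp only [mem_filter, mem_range, (eastPos_strictMono N T).lt_iff_lt]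
  omega

lemma eBef_pathWord_total : eBef (pathWord M N T) (2 * (M + N)) = M + N := by
  rw [eBef_pathWord hT, filter_true_of_mem fun c hc => eastPos_lt hT (mem_range.1 hc), card_range]

lemma nBef_pathWord_eastPos {c : ℕ} (hc : c < M + N) :
    nBef (pathWord M N T) (eastPos N T c) = colHeight N T c := by
  have := nBef_add_eBef (pathWord M N T) (eastPos_lt hT hc).le
  rw [eBef_pathWord_eastPos hT hc] at this
  rw [eastPos] at this ⊢
  omega

lemma isDyckStep_pathWord : IsDyckStep (M + N) (pathWord M N T) := by
  have h_total := nBef_add_eBef (pathWord M N T) le_rfl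
  rw [eBef_pathWord_total hT] at h_total
  refine isDyckStep_of_eBef_lt_nBef _ (by omega) fun i hi => ?_
  obtain ⟨c, hc, hci⟩ := pathWord_eq_false_iff.1 hi
  rw [← hci, eBef_pathWord_eastPos hT hc, nBef_pathWord_eastPos hT hc]
  exact lt_colHeight hT hc

lemma eastPos_add_one_lt {c : ℕ} (hc : c ∈ T) : eastPos N T c + 1 < 2 * (M + N) := by
  have h_succ := eastPos_succ N T c
  have := eastPos_lt hT (c := c + 1)
  have := mem_range.1 ((mem_powersetCard.1 hT).1 hc)
  rw [if_pos hc] at h_succ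
  omega

lemma isDDb_pathOf {B : ℕ} {D : Finset ℕ} (hD : D ∈ powersetCard B (range (M + N) \ T)) :
    IsDDb M N N B 0 (pathOf M N T D) := by
  obtain ⟨hTs, hTc⟩ := mem_powersetCard.1 hT
  obtain ⟨hDs, hDc⟩ := mem_powersetCard.1 hD
  have hT_lt {c} (hc : c ∈ T) : c + 1 < M + N := by have := mem_range.1 (hTs hc); omega
  have hD_mem {c} (hc : c ∈ D) : c < M + N ∧ c ∉ T := by simpa using hDs hc
  refine ⟨isDyckStep_pathWord hT, ?_, ?_, by simp [pathOf], by simp [pathOf], by simp [pathOf],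
    by simp [pathOf], ?_, ?_, ?_, ?_⟩
  · intro i hi
    obtain ⟨c, hc, hci⟩ := (mem_filter.1 hi).2
    exact ⟨pathWord_eastPos_add_one hc hci.symm, ⟨eastPos N T c, by omega⟩, hci.symm,
      pathWord_eq_false_iff.2 ⟨c, by have := hT_lt hc; omega, rfl⟩⟩
  · show #(pathValleys M N T) = M
    rw [pathValleys, card_filter_exists_eq (fun c _ c' _ h => (eastPos_strictMono N T).injective
      (Nat.add_right_cancel h)) fun c hc => eastPos_add_one_lt hT hc, hTc]
  · intro i hi
    obtain ⟨c, hc, hci⟩ := (mem_filter.1 hi).2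
    obtain ⟨hcMN, hcT⟩ := hD_mem hc
    refine ⟨pathWord_eq_false_iff.2 ⟨c, hcMN, hci⟩, ?_⟩
    by_cases hc1 : c + 1 < M + N
    · have h_next := eastPos_succ N T c
      rw [if_neg hcT] at h_next
      exact Or.inr ⟨⟨eastPos N T (c + 1), eastPos_lt hT hc1⟩, by simp [← hci, h_next],
        pathWord_eq_false_iff.2 ⟨c + 1, hc1, rfl⟩⟩
    · left
      rw [← hci, show c = M + N - 1 by omega, eastPos_last hT]
      omega
  · show #(pathFalls M N T D) = B
    rw [pathFalls, card_filter_exists_eq (eastPos_strictMono N T).injective.injOn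
      fun c hc => eastPos_lt hT (hD_mem hc).1, hDc]
  · exact fun i hi => pathWord_of_lt hi
  · exact fun i hi => pathWord_eq_false_of_val_eq hi

lemma colHeight_sub_of_mem {c : ℕ} (hc : c ∈ T) :
    colHeight N T c - (c + 1) = #{c' ∈ range (M + N - 1) \ T | c < c'} := by
  obtain ⟨hTs, hTc⟩ := mem_powersetCard.1 hT
  have h := card_filter_gt_add_card_range_succ_sdiff T (mem_range.1 (hTs hc))
  rw [range_add_one, insert_sdiff_of_mem _ hc, card_sdiff_of_subset hTs, card_range, hTc] at h
  have := card_inter_add_card_sdiff (range c) T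
  rw [card_range] at this
  rw [colHeight]
  omega

lemma colHeight_sub_of_notMem {c : ℕ} (hc : c ∈ range (M + N) \ T) :
    colHeight N T c - (c + 1) = #{c' ∈ range (M + N) \ T | c < c'} := by
  obtain ⟨hcMN, hcT⟩ := mem_sdiff.1 hc
  have h := card_filter_gt_add_card_range_succ_sdiff T (mem_range.1 hcMN)
  rw [range_add_one, insert_sdiff_of_notMem _ hcT, card_insert_of_notMem (by simp),
    card_range_size_sdiff hT] at h
  have := card_inter_add_card_sdiff (range c) T
  rw [card_range] at this
  rw [colHeight]
  omega

lemma areaDDb_pathOf_eq_sum (D : Finset ℕ) :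
    areaDDb (pathOf M N T D) = ∑ c ∈ range (M + N) \ D, (colHeight N T c - (c + 1)) := by
  refine (sum_bij (fun c hc => ⟨eastPos N T c, eastPos_lt hT (mem_range.1 (mem_sdiff.1 hc).1)⟩)
    (fun c hc => ?_) (fun c _ c' _ h => (eastPos_strictMono N T).injective (Fin.mk.inj h))
    (fun i hi => ?_) (fun c hc => ?_)).symm
  · obtain ⟨hcMN, hcD⟩ := mem_sdiff.1 hc
    simp only [pathOf, pathFalls, mem_filter, mem_univ, true_and, pathWord_eq_false_iff]
    refine ⟨⟨c, mem_range.1 hcMN, rfl⟩, fun ⟨c', hc', h⟩ => hcD ?_⟩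
    rwa [← (eastPos_strictMono N T).injective h]
  · simp only [pathOf, pathFalls, mem_filter, mem_univ, true_and, pathWord_eq_false_iff] at hi
    obtain ⟨⟨c, hc, hci⟩, hiD⟩ := hi
    exact ⟨c, mem_sdiff.2 ⟨mem_range.2 hc, fun hcD => hiD ⟨c, hcD, hci⟩⟩, Fin.ext hci⟩
  · have hcMN := mem_range.1 (mem_sdiff.1 hc).1
    simp only [pathOf]
    rw [nBef_pathWord_eastPos hT hcMN, eBef_pathWord_eastPos hT hcMN]
    omega

lemma areaDDb_pathOf {D : Finset ℕ} (hD : D ⊆ range (M + N) \ T) :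
    areaDDb (pathOf M N T D) = inversions (range (M + N - 1)) T +
      ∑ c ∈ (range (M + N) \ T) \ D, #{c' ∈ range (M + N) \ T | c < c'} := by
  have h_split : range (M + N) \ D = T ∪ ((range (M + N) \ T) \ D) := by
    ext c
    by_cases hcT : c ∈ T
    · have := mem_range.1 ((mem_powersetCard.1 hT).1 hcT)
      have : c ∉ D := fun h => (mem_sdiff.1 (hD h)).2 hcT
      simp only [mem_sdiff, mem_union, mem_range, hcT, true_or, iff_true]
      exact ⟨by omega, this⟩
    · simp [hcT]
  rw [areaDDb_pathOf_eq_sum hT, h_split, sum_union (disjoint_sdiff.mono_right sdiff_subset),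
    inversions]
  congr 1
  · exact sum_congr rfl fun c hc => colHeight_sub_of_mem hT hc
  · exact sum_congr rfl fun c hc => colHeight_sub_of_notMem hT (mem_sdiff.1 hc).1

lemma colY_pathWord_zero : colY (pathWord M N T) 0 = N := by
  have h_card := Fin.card_filter_val_lt (n := 2 * (M + N)) (m := N)
  rw [min_eq_right (by omega)] at h_card
  refine (congrArg card ?_).trans h_card
  ext i
  simp only [mem_filter, mem_univ, true_and, Nat.le_zero]
  constructor
  · rintro ⟨hw, he⟩
    by_contra h
    rcases (not_lt.1 h).eq_or_lt with h | h
    · rw [pathWord_eq_false_of_val_eq h.symm] at hw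
      exact Bool.false_ne_true hw
    · have h_east : pathWord M N T ⟨N, by omega⟩ = false := pathWord_eq_false_of_val_eq rfl
      have := eBef_lt_of_eq_false _ h_east h
      omega
  · intro h
    refine ⟨pathWord_of_lt h, ?_⟩
    rw [eBef_pathWord hT, card_eq_zero, filter_eq_empty_iff]
    intro c _
    simp only [eastPos, colHeight]
    omega

lemma isDiagCol_pathWord_iff (c : ℕ) :
    IsDiagCol (pathWord M N T) (pathValleys M N T) c ↔ c ∈ T := by
  constructor
  · rintro ⟨i, j, -, hic, hji, hj⟩
    obtain ⟨c', hc', hc'j⟩ := (mem_filter.1 hj).2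
    have hc'MN := mem_range.1 ((mem_powersetCard.1 hT).1 hc')
    rwa [← hic, show i.1 = eastPos N T c' by omega, eBef_pathWord_eastPos hT (by omega)]
  · intro hc
    have hcMN := mem_range.1 ((mem_powersetCard.1 hT).1 hc)
    exact ⟨⟨eastPos N T c, by have := eastPos_add_one_lt hT hc; omega⟩,
      ⟨eastPos N T c + 1, eastPos_add_one_lt hT hc⟩,
      pathWord_eq_false_iff.2 ⟨c, by omega, rfl⟩, eBef_pathWord_eastPos hT (by omega), rfl,
      mem_filter.2 ⟨mem_univ _, c, hc, rfl⟩⟩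

lemma bH_pathWord (c : ℕ) : bH (pathWord M N T) (pathValleys M N T) 0 c = colHeight N T c := by
  simp only [bH, colY_pathWord_zero hT, colHeight, ← range_eq_Ico, diagStep,
    isDiagCol_pathWord_iff hT, sum_boole, filter_mem_eq_inter, Nat.cast_id]

lemma nextTouch_pathWord_zero :
    nextTouch (M + N) (pathWord M N T) (pathValleys M N T) 0 = M + N := by
  refine le_antisymm (Nat.sInf_le (Or.inr rfl)) (le_csInf ⟨M + N, Or.inr rfl⟩ ?_)
  rintro c (⟨-, hc⟩ | rfl)
  · rw [bH_pathWord hT] at hc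
    by_contra h
    have := lt_colHeight hT (not_le.1 h)
    omega
  · exact le_rfl

lemma touchPt_pathWord {k : ℕ} (hk : 1 ≤ k) :
    touchPt (M + N) (pathWord M N T) (pathValleys M N T) k = M + N := by
  induction k with
  | zero => omega
  | succ k ih =>
    rcases Nat.eq_zero_or_pos k with rfl | hk
    · exact nextTouch_pathWord_zero hT
    · rw [touchPt, ih hk, nextTouch_self]

lemma bounceS_pathWord (P : Finset (Fin (2 * (M + N)))) :
    bounceS (M + N) (pathWord M N T) (pathValleys M N T) P = 0 := by
  refine sum_eq_zero fun h hh => card_eq_zero.2 (filter_eq_empty_iff.2 fun k hk => ?_)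
  rw [touchPt_pathWord hT (mem_Icc.1 hk).1]
  simpa using (mem_range.1 (mem_filter.1 hh).1)

lemma diagCols_pathOf : diagCols (M + N) (pathWord M N T) (pathValleys M N T) = T := by
  rw [diagCols, filter_congr fun c _ => isDiagCol_pathWord_iff hT c, filter_mem_eq_inter,
    inter_eq_right.2 (subset_range_size hT)]

lemma fallCols_pathOf {D : Finset ℕ} (hD : D ⊆ range (M + N)) :
    fallCols (pathWord M N T) (pathFalls M N T D) = D := by
  ext c
  simp only [fallCols, pathFalls, mem_image, mem_filter, mem_univ, true_and]
  constructor
  · rintro ⟨i, ⟨c', hc', hc'i⟩, rfl⟩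
    rwa [← hc'i, eBef_pathWord_eastPos hT (mem_range.1 (hD hc'))]
  · intro hc
    have hcMN := mem_range.1 (hD hc)
    exact ⟨⟨eastPos N T c, eastPos_lt hT hcMN⟩, ⟨c, hc, rfl⟩,
      eBef_pathWord_eastPos hT hcMN⟩

end PathOfColumns

section Structure

variable {M N B A : ℕ} {x : DDbCand (M + N)} (hx : IsDDb M N N B A x)
include hx

lemma IsDDb.le_val_of_eq_false {i : Fin (2 * (M + N))} (hi : x.1 i = false) : N ≤ i.1 := by
  obtain ⟨-, -, -, -, -, -, -, -, -, hr1, -⟩ := hx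
  by_contra h
  rw [hr1 i (by omega)] at hi
  simp at hi

lemma IsDDb.eBef_lt_size {i : Fin (2 * (M + N))} (hi : x.1 i = false) :
    eBef x.1 i.1 < M + N := by
  have := eBef_lt_of_eq_false x.1 hi i.isLt
  rwa [hx.1.eBef_total] at this

lemma IsDDb.valleys_eq : x.2.1 = univ.filter fun i => x.1 i = true ∧ N ≤ i.1 := by
  obtain ⟨hDy, hZv, hZc, -, -, -, -, -, -, hr1, -⟩ := hx
  have h_sub : x.2.1 ⊆ univ.filter fun i => x.1 i = true ∧ N ≤ i.1 := by
    intro z hz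
    obtain ⟨hzt, j, hzj, hjf⟩ := hZv z hz
    refine mem_filter.2 ⟨mem_univ z, hzt, ?_⟩
    by_contra h
    rw [hr1 j (by omega)] at hjf
    simp at hjf
  refine eq_of_subset_of_card_le h_sub ?_
  have h_split := card_filter_add_card_filter_not (s := univ.filter fun i => x.1 i = true)
    (fun i : Fin (2 * (M + N)) => N ≤ i.1)
  have h_low : (univ.filter fun i => x.1 i = true).filter (fun i => ¬ N ≤ i.1) =
      univ.filter fun i : Fin (2 * (M + N)) => i.1 < N := by
    ext i
    simp only [mem_filter, mem_univ, true_and, not_le]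
    exact ⟨fun h => h.2, fun h => ⟨hr1 i h, h⟩⟩
  have h_north : #(univ.filter fun i => x.1 i = true) = M + N := by
    simpa [nBef] using hDy.1
  rw [filter_filter, h_low, Fin.card_filter_val_lt, h_north, min_eq_right (by omega)] at h_split
  rw [hZc]
  omega

lemma IsDDb.peaks_eq_empty : x.2.2.1 = ∅ := by
  refine eq_empty_iff_forall_notMem.2 fun p hp => ?_
  have hZ := hx.valleys_eq
  obtain ⟨-, -, -, hPp, -, hPZ, hPl, -, -, hr1, -⟩ := hx
  have hpN : p.1 < N := by
    by_contra h
    refine disjoint_left.1 hPZ hp ?_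
    rw [hZ]
    exact mem_filter.2 ⟨mem_univ p, (hPp p hp).1, by omega⟩
  obtain ⟨j, hj, hjp⟩ := hPl p hp
  have := hj.2 ⟨j.1 + 1, by omega⟩ rfl
  rw [hr1 _ (by simp only; omega)] at this
  simp at this

lemma IsDDb.valley_lt_iff {z i : Fin (2 * (M + N))} (hz : z ∈ x.2.1) (hi : x.1 i = false) :
    z.1 < i.1 ↔ eBef x.1 (z.1 - 1) < eBef x.1 i.1 := by
  obtain ⟨hzt, j, hzj, hjf⟩ := hx.2.1 z hz
  rw [show z.1 - 1 = j.1 by omega]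
  refine ⟨fun h => eBef_lt_of_eq_false x.1 hjf (by omega), fun h => ?_⟩
  have hji : j.1 < i.1 := by
    by_contra h'
    exact absurd (eBef_mono x.1 (not_lt.1 h')) (not_le.2 h)
  have hzi : z.1 ≠ i.1 := fun h' => by rw [Fin.ext h'] at hzt; simp [hzt] at hi
  omega

lemma IsDDb.injOn_valleys : Set.InjOn (fun z : Fin (2 * (M + N)) => eBef x.1 (z.1 - 1)) x.2.1 := by
  intro z hz z' hz' h
  obtain ⟨-, j, hzj, hjf⟩ := hx.2.1 z hz
  obtain ⟨-, j', hzj', hjf'⟩ := hx.2.1 z' hz'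
  simp only [hzj, hzj', Nat.add_sub_cancel] at h
  have := congrArg Fin.val (eBef_injOn_false x.1 hjf hjf' h)
  exact Fin.ext (by omega)

lemma IsDDb.diagCols_eq_image :
    diagCols (M + N) x.1 x.2.1 = x.2.1.image fun z => eBef x.1 (z.1 - 1) := by
  ext c
  simp only [diagCols, IsDiagCol, mem_filter, mem_range, mem_image]
  constructor
  · rintro ⟨-, i, j, -, hic, hji, hj⟩
    exact ⟨j, hj, by rw [hji, Nat.add_sub_cancel, hic]⟩
  · rintro ⟨z, hz, rfl⟩
    obtain ⟨-, j, hzj, hjf⟩ := hx.2.1 z hz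
    rw [show z.1 - 1 = j.1 by omega]
    exact ⟨hx.eBef_lt_size hjf, j, z, hjf, rfl, hzj, hz⟩

lemma IsDDb.diagCols_mem_powersetCard :
    diagCols (M + N) x.1 x.2.1 ∈ powersetCard M (range (M + N - 1)) := by
  have ⟨_, _, hZc, _⟩ := hx
  rw [hx.diagCols_eq_image, mem_powersetCard, card_image_of_injOn hx.injOn_valleys, hZc]
  refine ⟨fun c hc => ?_, rfl⟩
  obtain ⟨z, hz, rfl⟩ := mem_image.1 hc
  obtain ⟨-, j, hzj, hjf⟩ := hx.2.1 z hz
  have h_last := hx.1.eq_false_of_last ⟨2 * (M + N) - 1, by omega⟩ (by simp only; omega)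
  have h1 := eBef_lt_of_eq_false x.1 hjf (k := 2 * (M + N) - 1) (by omega)
  have h2 : eBef x.1 (2 * (M + N) - 1) < M + N := hx.eBef_lt_size h_last
  simp only [hzj, Nat.add_sub_cancel, mem_range]
  omega

lemma IsDDb.nBef_eq {i : Fin (2 * (M + N))} (hi : x.1 i = false) :
    nBef x.1 i.1 = N + #{z ∈ x.2.1 | z.1 < i.1} := by
  have ⟨_, _, _, _, _, _, _, _, _, hr1, _⟩ := hx
  have hiN := hx.le_val_of_eq_false hi
  have h_split : (univ.filter fun j : Fin (2 * (M + N)) => j.1 < i.1 ∧ x.1 j = true) =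
      (univ.filter fun j : Fin (2 * (M + N)) => j.1 < N) ∪ {z ∈ x.2.1 | z.1 < i.1} := by
    rw [hx.valleys_eq]
    ext j
    simp only [mem_filter, mem_univ, true_and, mem_union]
    constructor
    · rintro ⟨hj, hjt⟩
      by_cases hjN : j.1 < N
      · exact Or.inl hjN
      · exact Or.inr ⟨⟨hjt, by omega⟩, hj⟩
    · rintro (hj | ⟨⟨hjt, -⟩, hj⟩)
      · exact ⟨by omega, hr1 j hj⟩
      · exact ⟨hj, hjt⟩
  rw [nBef, h_split, card_union_of_disjoint, Fin.card_filter_val_lt, min_eq_right (by omega)]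
  rw [hx.valleys_eq, filter_filter]
  exact disjoint_filter.2 fun j _ h1 h2 => by omega

lemma IsDDb.card_valleys_lt {i : Fin (2 * (M + N))} (hi : x.1 i = false) :
    #{z ∈ x.2.1 | z.1 < i.1} = #(range (eBef x.1 i.1) ∩ diagCols (M + N) x.1 x.2.1) := by
  rw [← card_image_of_injOn (hx.injOn_valleys.mono (filter_subset _ _))]
  congr 1
  ext c
  simp only [hx.diagCols_eq_image, mem_image, mem_filter, mem_inter, mem_range]
  constructor
  · rintro ⟨z, ⟨hz, hzi⟩, rfl⟩
    exact ⟨(hx.valley_lt_iff hz hi).1 hzi, z, hz, rfl⟩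
  · rintro ⟨hc, z, hz, rfl⟩
    exact ⟨z, ⟨hz, (hx.valley_lt_iff hz hi).2 hc⟩, rfl⟩

lemma IsDDb.eastPos_eBef {i : Fin (2 * (M + N))} (hi : x.1 i = false) :
    eastPos N (diagCols (M + N) x.1 x.2.1) (eBef x.1 i.1) = i.1 := by
  have := nBef_add_eBef x.1 i.isLt.le
  rw [eastPos, colHeight, ← hx.card_valleys_lt hi]
  rw [hx.nBef_eq hi] at this
  omega

lemma IsDDb.pathWord_diagCols : pathWord M N (diagCols (M + N) x.1 x.2.1) = x.1 := by
  have hT := hx.diagCols_mem_powersetCard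
  have h_east : (univ.filter fun i => x.1 i = false) =
      univ.filter fun i => pathWord M N (diagCols (M + N) x.1 x.2.1) i = false := by
    refine eq_of_subset_of_card_le (fun i hi => ?_) ?_
    · have hi := (mem_filter.1 hi).2
      exact mem_filter.2 ⟨mem_univ i, pathWord_eq_false_iff.2
        ⟨_, hx.eBef_lt_size hi, hx.eastPos_eBef hi⟩⟩
    · rw [← eBef_length, ← eBef_length, eBef_pathWord_total hT, hx.1.eBef_total]
  funext i
  have h_i := congrArg (i ∈ ·) h_east
  simp only [mem_filter, mem_univ, true_and, eq_iff_iff] at h_i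
  rw [Bool.eq_iff_iff, ← not_iff_not, Bool.not_eq_true, Bool.not_eq_true]
  exact h_i.symm

lemma IsDDb.pathValleys_diagCols : pathValleys M N (diagCols (M + N) x.1 x.2.1) = x.2.1 := by
  have h_pos {z} (hz : z ∈ x.2.1) :
      eastPos N (diagCols (M + N) x.1 x.2.1) (eBef x.1 (z.1 - 1)) + 1 = z := by
    obtain ⟨-, j, hzj, hjf⟩ := hx.2.1 z hz
    rw [show z.1 - 1 = j.1 by omega, hx.eastPos_eBef hjf, hzj]
  ext z
  simp only [pathValleys, mem_filter, mem_univ, true_and]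
  constructor
  · rintro ⟨c, hc, hcz⟩
    obtain ⟨z', hz', rfl⟩ := mem_image.1 (hx.diagCols_eq_image ▸ hc)
    rwa [show z = z' from Fin.ext (by rw [← hcz, h_pos hz'])]
  · exact fun hz => ⟨_, hx.diagCols_eq_image ▸ mem_image_of_mem _ hz, h_pos hz⟩

lemma IsDDb.fallCols_mem_powersetCard :
    fallCols x.1 x.2.2.2 ∈ powersetCard B (range (M + N) \ diagCols (M + N) x.1 x.2.1) := by
  have ⟨_, hZv, _, _, _, _, _, hFf, hFc, _, _⟩ := hx
  rw [mem_powersetCard, fallCols, card_image_of_injOn fun i hi i' hi' h =>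
    eBef_injOn_false x.1 (hFf i hi).1 (hFf i' hi').1 h, hFc]
  refine ⟨fun c hc => ?_, rfl⟩
  obtain ⟨i, hi, rfl⟩ := mem_image.1 hc
  refine mem_sdiff.2 ⟨mem_range.2 (hx.eBef_lt_size (hFf i hi).1), fun hT => ?_⟩
  obtain ⟨z, hz, hzi⟩ := mem_image.1 (hx.diagCols_eq_image ▸ hT)
  obtain ⟨hzt, j, hzj, hjf⟩ := hZv z hz
  rw [show z.1 - 1 = j.1 by omega] at hzi
  obtain rfl := eBef_injOn_false x.1 hjf (hFf i hi).1 hzi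
  rcases (hFf j hi).2 with h | ⟨k, hk, hkf⟩
  · omega
  · rw [show k = z from Fin.ext (by omega), hzt] at hkf
    simp at hkf

lemma IsDDb.pathFalls_fallCols :
    pathFalls M N (diagCols (M + N) x.1 x.2.1) (fallCols x.1 x.2.2.2) = x.2.2.2 := by
  have ⟨_, _, _, _, _, _, _, hFf, _⟩ := hx
  ext i
  simp only [pathFalls, fallCols, mem_filter, mem_univ, true_and, mem_image]
  constructor
  · rintro ⟨_, ⟨i', hi', rfl⟩, hi'i⟩
    rw [hx.eastPos_eBef (hFf i' hi').1] at hi'i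
    rwa [← Fin.ext hi'i]
  · exact fun hi => ⟨_, ⟨i, hi, rfl⟩, hx.eastPos_eBef (hFf i hi).1⟩

lemma IsDDb.pathOf_eq :
    pathOf M N (diagCols (M + N) x.1 x.2.1) (fallCols x.1 x.2.2.2) = x := by
  rw [pathOf, hx.pathWord_diagCols, hx.pathValleys_diagCols, hx.pathFalls_fallCols,
    ← hx.peaks_eq_empty]

end Structure

theorem sum_isDDb_eq_sum_pathOf (M N B : ℕ) :
    ∑ x ∈ univ.filter (IsDDb M N N B 0), qv ^ areaDDb x * tv ^ bounceDDb x =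
      ∑ p ∈ (powersetCard M (range (M + N - 1))).sigma
          fun T => powersetCard B (range (M + N) \ T), qv ^ areaDDb (pathOf M N p.1 p.2) := by
  refine (sum_nbij' (fun p => pathOf M N p.1 p.2)
    (fun x => ⟨diagCols (M + N) x.1 x.2.1, fallCols x.1 x.2.2.2⟩) ?_ ?_ ?_ ?_ ?_).symm
  · rintro ⟨T, D⟩ hp
    obtain ⟨hT, hD⟩ := mem_sigma.1 hp
    exact mem_filter.2 ⟨mem_univ _, isDDb_pathOf hT hD⟩
  · intro x hx
    have hx := (mem_filter.1 hx).2
    exact mem_sigma.2 ⟨hx.diagCols_mem_powersetCard, hx.fallCols_mem_powersetCard⟩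
  · rintro ⟨T, D⟩ hp
    obtain ⟨hT, hD⟩ := mem_sigma.1 hp
    simp only [pathOf]
    rw [diagCols_pathOf hT, fallCols_pathOf hT ((mem_powersetCard.1 hD).1.trans sdiff_subset)]
  · exact fun x hx => IsDDb.pathOf_eq (mem_filter.1 hx).2
  · rintro ⟨T, D⟩ hp
    rw [bounceDDb, pathOf, bounceS_pathWord (mem_sigma.1 hp).1, pow_zero, mul_one]

theorem sum_isDDb_zero_peaks (M N B : ℕ) :
    ∑ x ∈ univ.filter (IsDDb M N N B 0), qv ^ areaDDb x * tv ^ bounceDDb x =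
      qv ^ (N - B).choose 2 * qBinom (M + N - 1) M * qBinom N B := by
  rw [sum_isDDb_eq_sum_pathOf, sum_sigma]
  calc ∑ T ∈ powersetCard M (range (M + N - 1)), ∑ D ∈ powersetCard B (range (M + N) \ T),
        qv ^ areaDDb (pathOf M N T D)
      = ∑ T ∈ powersetCard M (range (M + N - 1)),
          qv ^ inversions (range (M + N - 1)) T * (qv ^ (N - B).choose 2 * qBinom N B) := by
        refine sum_congr rfl fun T hT => ?_
        have h_gf := sum_powersetCard_qv_pow_sum_card_gt (range (M + N) \ T) B
        rw [card_range_size_sdiff hT] at h_gf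
        rw [← h_gf, mul_sum]
        refine sum_congr rfl fun D hD => ?_
        rw [areaDDb_pathOf hT (mem_powersetCard.1 hD).1, pow_add]
    _ = qv ^ (N - B).choose 2 * qBinom (M + N - 1) M * qBinom N B := by
        rw [← sum_mul, sum_powersetCard_qv_pow_inversions, card_range]
        ring

theorem sum_isDDb_fully_diagonal (M N B A : ℕ) :
    ∑ x ∈ univ.filter (IsDDb M N N B A), qv ^ areaDDb x * tv ^ bounceDDb x =
      (if A = 0 then 1 else 0) * qv ^ (N - B).choose 2 * qBinom (M + N - 1) M * qBinom N B := by
  split_ifs with hA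
  · rw [hA, sum_isDDb_zero_peaks, one_mul]
  · have h_empty : univ.filter (IsDDb M N N B A) = ∅ := by
      refine filter_false_of_mem fun x _ hx => hA ?_
      have ⟨_, _, _, _, hPc, _⟩ := hx
      rw [← hPc, hx.peaks_eq_empty, card_empty]
    rw [h_empty, sum_empty]
    ring

/-- For `n ≥ 1` and `m, a, b ≥ 0`, the `(area, bounce)`
q,t-enumerator of decorated Dyck paths with decorated falls satisfies
`DDb_{q,t}(m, n∖n)^{∗b,∘a}
  = δ_{a,0} ⬝ q^(binom (n-b) 2) ⬝ [m+n-1 choose m]_q ⬝ [n choose b]_q`. -/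
theorem DDb_fully_diagonal (m n a b : ℤ)
    (hn : 1 ≤ n) (hm : 0 ≤ m) (ha : 0 ≤ a) (hb : 0 ≤ b) :
    DDbE m n n b a =
      (if a = 0 then 1 else 0) * qv ^ ((n - b) * (n - b - 1) / 2).toNat *
        qBinomZ (m + n - 1) m * qBinomZ n b := by
  lift m to ℕ using hm
  lift n to ℕ using (by omega)
  lift a to ℕ using ha
  lift b to ℕ using hb
  rw [DDbE, if_pos (by omega), Int.toNat_natCast, Int.toNat_natCast, Int.toNat_natCast,
    Int.toNat_natCast, sum_isDDb_fully_diagonal,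
    show (m : ℤ) + n - 1 = ((m + n - 1 : ℕ) : ℤ) by omega, qBinomZ_natCast, qBinomZ_natCast]
  simp only [Nat.cast_eq_zero]
  rcases le_or_gt b n with hbn | hbn
  · rw [show (n : ℤ) - b = ((n - b : ℕ) : ℤ) by omega, toNat_mul_pred_div_two]
  · simp [qBinom_eq_zero_of_lt hbn]
end
end

section
/- For all nonnegative integers j, s, u, v with u + v ≥ 1, the following identity of q-binomial coefficients holds (as polynomials in q): qbinom(j+s, v)_q · qbinom(j+s+u−1, u)_q = q^v · qbinom(u+v−1, v)_q · qbinom(u+s+j−1, u+v)_q + qbinom(u+v−1, v−1)_q · qbinom(u+j+s, u+v)_q. -/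
open Finset

attribute [local instance] Classical.propDecidable

noncomputable section

/-- The q-integer `[m]_q = 1 + q + ⋯ + q^(m-1)`. -/
def qInt (m : ℕ) : R2 := ∑ i ∈ range m, qv ^ i

lemma qInt_add (x y : ℕ) : qInt (x + y) = qInt x + qv ^ x * qInt y := by
  rw [qInt, Finset.sum_range_add]
  simp [qInt, pow_add, Finset.mul_sum]

/-- The q-factorial. -/
def qFact : ℕ → R2
  | 0 => 1
  | n + 1 => qFact n * qInt (n + 1)

lemma qInt_ne_zero (m : ℕ) (hm : 1 ≤ m) : qInt m ≠ 0 := by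
  intro h
  have := congrArg (MvPolynomial.eval (fun _ => (1:ℤ))) h
  simp [qInt, qv] at this
  omega

lemma qFact_ne_zero (n : ℕ) : qFact n ≠ 0 := by
  induction n with
  | zero => exact one_ne_zero
  | succ n ih =>
    show qFact n * qInt (n+1) ≠ 0
    exact mul_ne_zero ih (qInt_ne_zero _ (by omega))

lemma qBinom_zero (N : ℕ) : qBinom N 0 = 1 := by cases N <;> rfl

lemma qBinom_eq_zero {N k : ℕ} (h : N < k) : qBinom N k = 0 := by
  induction N generalizing k with
  | zero => cases k with
    | zero => omega
    | succ k => rfl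
  | succ N ih =>
    cases k with
    | zero => omega
    | succ k =>
      show qBinom N k + qv ^ (k+1) * qBinom N (k+1) = 0
      rw [ih (by omega), ih (by omega)]; ring

lemma qBinom_self (N : ℕ) : qBinom N N = 1 := by
  induction N with
  | zero => rfl
  | succ N ih =>
    show qBinom N N + qv ^ (N+1) * qBinom N (N+1) = 1
    rw [ih, qBinom_eq_zero (by omega)]; ring

lemma qBinom_mul_fact_aux : ∀ n k d : ℕ, k + d = n →
    qBinom (k + d) k * (qFact k * qFact d) = qFact (k + d) := by
  intro n
  induction n with
  | zero =>
    intro k d h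
    obtain ⟨rfl, rfl⟩ : k = 0 ∧ d = 0 := by omega
    simp [qBinom_zero, qFact]
  | succ n ih =>
    intro k d h
    rcases Nat.eq_zero_or_pos k with rfl | hk
    · rw [qBinom_zero]
      show 1 * (1 * qFact d) = qFact (0 + d)
      rw [Nat.zero_add]; ring
    · obtain ⟨k, rfl⟩ : ∃ k', k = k' + 1 := ⟨k - 1, by omega⟩
      rcases Nat.eq_zero_or_pos d with rfl | hd
      · rw [show k + 1 + 0 = k + 1 from rfl, qBinom_self]
        show 1 * (qFact (k+1) * 1) = qFact (k+1)
        ring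
      · obtain ⟨d, rfl⟩ : ∃ d', d = d' + 1 := ⟨d - 1, by omega⟩
        have h1 := ih k (d+1) (by omega)
        have e2 : qBinom (k + (d+1)) (k+1) * (qFact (k+1) * qFact d) = qFact (k+(d+1)) := by
          rw [show k+(d+1) = (k+1)+d from by omega]; exact ih (k+1) d (by omega)
        have hs : qInt (k+1+(d+1)) = qInt (k+1) + qv^(k+1) * qInt (d+1) := qInt_add (k+1) (d+1)
        have hrec : qBinom (k+1+(d+1)) (k+1)
            = qBinom (k+(d+1)) k + qv^(k+1) * qBinom (k+(d+1)) (k+1) := by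
          rw [show k+1+(d+1) = (k+(d+1))+1 from by omega]; rfl
        have fk : qFact (k+1) = qFact k * qInt (k+1) := rfl
        have fd : qFact (d+1) = qFact d * qInt (d+1) := rfl
        have fN : qFact (k+1+(d+1)) = qFact (k+(d+1)) * qInt (k+1+(d+1)) := by
          rw [show k+1+(d+1) = (k+(d+1))+1 from by omega]
          rfl
        rw [hrec]
        linear_combination qInt (k+1) * h1 + (qv^(k+1) * qInt (d+1)) * e2
          - qFact (k+(d+1)) * hs + (qBinom (k+(d+1)) k * qFact (d+1)) * fk
          + (qv^(k+1) * qBinom (k+(d+1)) (k+1) * qFact (k+1)) * fd - fN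

lemma qBinom_mul_fact (k d : ℕ) :
    qBinom (k + d) k * (qFact k * qFact d) = qFact (k + d) :=
  qBinom_mul_fact_aux (k + d) k d rfl

lemma qBinom_symm (k l : ℕ) : qBinom (k + l) k = qBinom (k + l) l := by
  apply mul_right_cancel₀ (mul_ne_zero (qFact_ne_zero k) (qFact_ne_zero l))
  have h1 := qBinom_mul_fact k l
  have h2 : qBinom (k + l) l * (qFact l * qFact k) = qFact (k + l) := by
    rw [show k + l = l + k from Nat.add_comm k l]; exact qBinom_mul_fact l k
  linear_combination h1 - h2

lemma key_qInt (m a b : ℕ) :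
    qInt (m+b+2) * qInt (a+b+2)
      = qv^(b+1) * qInt (a+1) * qInt (m+1) + qInt (b+1) * qInt (m+a+b+3) := by
  have s1 : qInt (m+b+2) = qInt (m+1) + qv^(m+1) * qInt (b+1) := by
    have := qInt_add (m+1) (b+1)
    rw [show (m+1)+(b+1) = m+b+2 from by omega] at this; exact this
  have s2 : qInt (a+b+2) = qInt (b+1) + qv^(b+1) * qInt (a+1) := by
    have := qInt_add (b+1) (a+1)
    rw [show (b+1)+(a+1) = a+b+2 from by omega] at this; exact this
  have s3 : qInt (m+a+b+3) = qInt (m+1) + qv^(m+1) * qInt (a+b+2) := by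
    have := qInt_add (m+1) (a+b+2)
    rw [show (m+1)+(a+b+2) = m+a+b+3 from by omega] at this; exact this
  rw [s1, s3, s2]
  ring

lemma key_main (m a b : ℕ) :
    qBinom (m+b+2) (b+1) * qBinom (m+a+b+2) (a+1)
      = qv^(b+1) * qBinom (a+b+1) (b+1) * qBinom (m+a+b+2) (a+b+2)
        + qBinom (a+b+1) b * qBinom (m+a+b+3) (a+b+2) := by
  set K := qFact (b+1) * qFact (m+1) * qFact (a+1) * qFact (m+b+1) * qFact (a+b+2) with hK
  have hKne : K ≠ 0 := by
    rw [hK]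
    exact mul_ne_zero (mul_ne_zero (mul_ne_zero (mul_ne_zero
      (qFact_ne_zero _) (qFact_ne_zero _)) (qFact_ne_zero _)) (qFact_ne_zero _))
      (qFact_ne_zero _)
  apply mul_right_cancel₀ hKne
  have h1 : qBinom (m+b+2) (b+1) * (qFact (b+1) * qFact (m+1)) = qFact (m+b+2) := by
    have := qBinom_mul_fact (b+1) (m+1)
    rw [show (b+1)+(m+1) = m+b+2 from by omega] at this; exact this
  have h2 : qBinom (m+a+b+2) (a+1) * (qFact (a+1) * qFact (m+b+1)) = qFact (m+a+b+2) := by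
    have := qBinom_mul_fact (a+1) (m+b+1)
    rw [show (a+1)+(m+b+1) = m+a+b+2 from by omega] at this; exact this
  have h3 : qBinom (a+b+1) (b+1) * (qFact (b+1) * qFact a) = qFact (a+b+1) := by
    have := qBinom_mul_fact (b+1) a
    rw [show (b+1)+a = a+b+1 from by omega] at this; exact this
  have h4 : qBinom (m+a+b+2) (a+b+2) * (qFact (a+b+2) * qFact m) = qFact (m+a+b+2) := by
    have := qBinom_mul_fact (a+b+2) m
    rw [show (a+b+2)+m = m+a+b+2 from by omega] at this; exact this
  have h5 : qBinom (a+b+1) b * (qFact b * qFact (a+1)) = qFact (a+b+1) := by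
    have := qBinom_mul_fact b (a+1)
    rw [show b+(a+1) = a+b+1 from by omega] at this; exact this
  have h6 : qBinom (m+a+b+3) (a+b+2) * (qFact (a+b+2) * qFact (m+1)) = qFact (m+a+b+3) := by
    have := qBinom_mul_fact (a+b+2) (m+1)
    rw [show (a+b+2)+(m+1) = m+a+b+3 from by omega] at this; exact this
  have r1 : qFact (a+1) = qFact a * qInt (a+1) := rfl
  have r2 : qFact (b+1) = qFact b * qInt (b+1) := rfl
  have r3 : qFact (m+1) = qFact m * qInt (m+1) := rfl
  have r4 : qFact (m+b+2) = qFact (m+b+1) * qInt (m+b+2) := rfl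
  have r5 : qFact (a+b+2) = qFact (a+b+1) * qInt (a+b+2) := rfl
  have r6 : qFact (m+a+b+3) = qFact (m+a+b+2) * qInt (m+a+b+3) := rfl
  have hq := key_qInt m a b
  have e1 : qBinom (m+b+2) (b+1) * qBinom (m+a+b+2) (a+1) * K
      = qInt (m+b+2) * qInt (a+b+2) * (qFact (m+b+1) * qFact (m+a+b+2) * qFact (a+b+1)) := by
    calc qBinom (m+b+2) (b+1) * qBinom (m+a+b+2) (a+1) * K
        = (qBinom (m+b+2) (b+1) * (qFact (b+1) * qFact (m+1)))
            * ((qBinom (m+a+b+2) (a+1) * (qFact (a+1) * qFact (m+b+1))) * qFact (a+b+2)) := by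
          rw [hK]; ring
      _ = qFact (m+b+2) * (qFact (m+a+b+2) * qFact (a+b+2)) := by rw [h1, h2]
      _ = _ := by rw [r4, r5]; ring
  have e2 : qv^(b+1) * qBinom (a+b+1) (b+1) * qBinom (m+a+b+2) (a+b+2) * K
      = qv^(b+1) * qInt (a+1) * qInt (m+1)
          * (qFact (m+b+1) * qFact (m+a+b+2) * qFact (a+b+1)) := by
    calc qv^(b+1) * qBinom (a+b+1) (b+1) * qBinom (m+a+b+2) (a+b+2) * K
        = qv^(b+1) * ((qBinom (a+b+1) (b+1) * (qFact (b+1) * qFact a))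
            * ((qBinom (m+a+b+2) (a+b+2) * (qFact (a+b+2) * qFact m))
              * (qInt (a+1) * qInt (m+1) * qFact (m+b+1)))) := by
          rw [hK, r1, r3]; ring
      _ = qv^(b+1) * (qFact (a+b+1)
            * (qFact (m+a+b+2) * (qInt (a+1) * qInt (m+1) * qFact (m+b+1)))) := by
          rw [h3, h4]
      _ = _ := by ring
  have e3 : qBinom (a+b+1) b * qBinom (m+a+b+3) (a+b+2) * K
      = qInt (b+1) * qInt (m+a+b+3)
          * (qFact (m+b+1) * qFact (m+a+b+2) * qFact (a+b+1)) := by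
    calc qBinom (a+b+1) b * qBinom (m+a+b+3) (a+b+2) * K
        = (qBinom (a+b+1) b * (qFact b * qFact (a+1)))
            * ((qBinom (m+a+b+3) (a+b+2) * (qFact (a+b+2) * qFact (m+1)))
              * (qInt (b+1) * qFact (m+b+1))) := by
          rw [hK, r2]; ring
      _ = qFact (a+b+1) * (qFact (m+a+b+3) * (qInt (b+1) * qFact (m+b+1))) := by rw [h5, h6]
      _ = _ := by rw [r6]; ring
  linear_combination e1 - e2 - e3
    + (qFact (m+b+1) * qFact (m+a+b+2) * qFact (a+b+1)) * hq

lemma qBinomZ_coe (N k : ℕ) : qBinomZ (N : ℤ) (k : ℤ) = qBinom N k := by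
  unfold qBinomZ
  split
  · simp
  · next hcond =>
    rw [qBinom_eq_zero (show N < k by omega)]

lemma qBinomZ_neg_one (N : ℤ) : qBinomZ N (-1) = 0 := by
  unfold qBinomZ
  rw [if_neg]
  rintro ⟨h, -⟩
  omega

lemma keyZ (n u v : ℕ) (h : 1 ≤ u + v) :
    qBinomZ (n : ℤ) (v : ℤ) * qBinomZ ((n:ℤ) + (u:ℤ) - 1) (u : ℤ)
      = qv ^ v * qBinomZ ((u:ℤ) + (v:ℤ) - 1) (v : ℤ)
          * qBinomZ ((u:ℤ) + (n:ℤ) - 1) ((u:ℤ) + (v:ℤ))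
        + qBinomZ ((u:ℤ) + (v:ℤ) - 1) ((v:ℤ) - 1)
          * qBinomZ ((u:ℤ) + (n:ℤ)) ((u:ℤ) + (v:ℤ)) := by
  rcases Nat.eq_zero_or_pos v with rfl | hv
  · -- v = 0, so u ≥ 1
    obtain ⟨a, rfl⟩ : ∃ a, u = a + 1 := ⟨u - 1, by omega⟩
    rw [show ((n:ℤ) + ((a+1:ℕ):ℤ) - 1) = ((n+a : ℕ) : ℤ) from by omega,
        show (((a+1:ℕ):ℤ) + ((0:ℕ):ℤ) - 1) = ((a : ℕ) : ℤ) from by omega,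
        show (((a+1:ℕ):ℤ) + ((n:ℕ):ℤ) - 1) = ((n+a : ℕ) : ℤ) from by omega,
        show (((a+1:ℕ):ℤ) + ((n:ℕ):ℤ)) = ((n+a+1 : ℕ) : ℤ) from by omega,
        show (((a+1:ℕ):ℤ) + ((0:ℕ):ℤ)) = ((a+1 : ℕ) : ℤ) from by omega,
        show (((0:ℕ):ℤ) - 1) = (-1 : ℤ) from by omega]
    rw [qBinomZ_coe, qBinomZ_coe, qBinomZ_coe, qBinomZ_coe, qBinomZ_neg_one,
        qBinom_zero, qBinom_zero]
    ring
  · obtain ⟨b, rfl⟩ : ∃ b, v = b + 1 := ⟨v - 1, by omega⟩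
    rcases Nat.eq_zero_or_pos u with rfl | hu
    · -- u = 0
      rw [show (((0:ℕ):ℤ) + ((b+1:ℕ):ℤ) - 1) = ((b : ℕ) : ℤ) from by omega,
          show (((0:ℕ):ℤ) + ((n:ℕ):ℤ)) = ((n : ℕ) : ℤ) from by omega,
          show (((0:ℕ):ℤ) + ((b+1:ℕ):ℤ)) = ((b+1 : ℕ) : ℤ) from by omega,
          show (((b+1:ℕ):ℤ) - 1) = ((b : ℕ) : ℤ) from by omega]
      simp only [qBinomZ_coe]
      rw [qBinom_eq_zero (show b < b + 1 by omega), qBinom_self]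
      rcases Nat.eq_zero_or_pos n with rfl | hn
      · rw [qBinom_eq_zero (show 0 < b + 1 by omega)]
        ring
      · obtain ⟨c, rfl⟩ : ∃ c, n = c + 1 := ⟨n - 1, by omega⟩
        rw [show (((c+1:ℕ):ℤ) + ((0:ℕ):ℤ) - 1) = ((c : ℕ) : ℤ) from by omega,
            qBinomZ_coe, qBinom_zero]
        ring
    · -- u = a+1, v = b+1
      obtain ⟨a, rfl⟩ : ∃ a, u = a + 1 := ⟨u - 1, by omega⟩
      rw [show ((n:ℤ) + ((a+1:ℕ):ℤ) - 1) = ((n+a : ℕ) : ℤ) from by omega,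
          show (((a+1:ℕ):ℤ) + ((b+1:ℕ):ℤ) - 1) = ((a+b+1 : ℕ) : ℤ) from by omega,
          show (((a+1:ℕ):ℤ) + ((n:ℕ):ℤ) - 1) = ((n+a : ℕ) : ℤ) from by omega,
          show (((a+1:ℕ):ℤ) + ((n:ℕ):ℤ)) = ((n+a+1 : ℕ) : ℤ) from by omega,
          show (((a+1:ℕ):ℤ) + ((b+1:ℕ):ℤ)) = ((a+b+2 : ℕ) : ℤ) from by omega,
          show (((b+1:ℕ):ℤ) - 1) = ((b : ℕ) : ℤ) from by omega]
      rw [qBinomZ_coe, qBinomZ_coe, qBinomZ_coe, qBinomZ_coe, qBinomZ_coe, qBinomZ_coe]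
      rcases Nat.lt_or_ge n (b+1) with hn | hn
      · rw [qBinom_eq_zero (show n < b+1 by omega),
            qBinom_eq_zero (show n+a < a+b+2 by omega),
            qBinom_eq_zero (show n+a+1 < a+b+2 by omega)]
        ring
      · rcases Nat.lt_or_ge n (b+2) with hn2 | hn2
        · obtain rfl : n = b + 1 := by omega
          rw [qBinom_self, qBinom_eq_zero (show b+1+a < a+b+2 by omega),
              show b+1+a+1 = a+b+2 from by omega, qBinom_self]
          have hsym : qBinom (b+1+a) (a+1) = qBinom (a+b+1) b := by
            have := qBinom_symm (a+1) b
            rw [show (a+1)+b = a+b+1 from by omega] at this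
            rw [show b+1+a = a+b+1 from by omega]
            exact this
          rw [hsym]; ring
        · obtain ⟨m, rfl⟩ : ∃ m, n = m + b + 2 := ⟨n - (b+2), by omega⟩
          rw [show m+b+2+a = m+a+b+2 from by omega,
              show m+a+b+2+1 = m+a+b+3 from by omega]
          exact key_main m a b

/-- For nonnegative integers `j, s, u, v` with `u + v ≥ 1`,
the q-binomial identity
`[j+s choose v]_q [j+s+u-1 choose u]_q
  = q^v [u+v-1 choose v]_q [u+s+j-1 choose u+v]_q
    + [u+v-1 choose v-1]_q [u+j+s choose u+v]_q`
(where q-binomials with lower index `< 0` or `>` upper index vanish). -/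
theorem qBinom_identity (j s u v : ℕ) (h : 1 ≤ u + v) :
    qBinomZ ((j : ℤ) + (s : ℤ)) (v : ℤ) *
        qBinomZ ((j : ℤ) + (s : ℤ) + (u : ℤ) - 1) (u : ℤ) =
      qv ^ v * qBinomZ ((u : ℤ) + (v : ℤ) - 1) (v : ℤ) *
          qBinomZ ((u : ℤ) + (s : ℤ) + (j : ℤ) - 1) ((u : ℤ) + (v : ℤ)) +
        qBinomZ ((u : ℤ) + (v : ℤ) - 1) ((v : ℤ) - 1) *
          qBinomZ ((u : ℤ) + (j : ℤ) + (s : ℤ)) ((u : ℤ) + (v : ℤ)) := by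
  rw [show (u:ℤ) + (s:ℤ) + (j:ℤ) - 1 = (u:ℤ) + ((j+s : ℕ):ℤ) - 1 from by omega,
      show (u:ℤ) + (j:ℤ) + (s:ℤ) = (u:ℤ) + ((j+s : ℕ):ℤ) from by omega,
      show (j:ℤ) + (s:ℤ) = ((j+s : ℕ):ℤ) from by omega]
  exact keyZ (j+s) u v h

end
end
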